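/- The translation ψ preserves typing: if Γ ⊢_c U : C in CCL, then Γ ⊢_{λs} ψ(U) : C in λ^Sym_Prop. -/

import Mathlib

/-! Types: atoms, their formal duals, conjunction, disjunction. -/

inductive MTy : Type where
  | atom : ℕ → MTy
  | natom : ℕ → MTy
  | and : MTy → MTy → MTy
  | or : MTy → MTy → MTy
deriving DecidableEq

/-- Negation of an m-type. -/
def MTy.neg : MTy → MTy
  | .atom a => .natom a
  | .natom a => .atom a
  | .and A B => .or A.neg B.neg
  | .or A B => .and A.neg B.neg

/-- Types: m-types or ⊥. -/
inductive Ty : Type where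
  | m : MTy → Ty
  | bot : Ty
deriving DecidableEq

/-! λ_s-terms of the system λ^Sym_Prop. -/

inductive LTerm : Type where
  | var : ℕ → LTerm
  | pair : LTerm → LTerm → LTerm
  | inj1 : LTerm → LTerm
  | inj2 : LTerm → LTerm
  | lam : ℕ → LTerm → LTerm
  | star : LTerm → LTerm → LTerm
deriving DecidableEq

namespace LTerm

/-- Free variables. -/
def Fv : LTerm → Finset ℕ
  | var x => {x}
  | pair u v => u.Fv ∪ v.Fv
  | inj1 t => t.Fv
  | inj2 t => t.Fv
  | lam x t => t.Fv.erase x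
  | star u v => u.Fv ∪ v.Fv

/-- Substitution u[x := v]. -/
def subst : LTerm → ℕ → LTerm → LTerm
  | var y, x, v => if y = x then v else var y
  | pair a b, x, v => pair (a.subst x v) (b.subst x v)
  | inj1 t, x, v => inj1 (t.subst x v)
  | inj2 t, x, v => inj2 (t.subst x v)
  | lam y t, x, v => if y = x then lam y t else lam y (t.subst x v)
  | star a b, x, v => star (a.subst x v) (b.subst x v)

/-- Number of free occurrences of a variable. -/
def countFree : LTerm → ℕ → ℕ
  | var y, x => if y = x then 1 else 0
  | pair a b, x => a.countFree x + b.countFree x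
  | inj1 t, x => t.countFree x
  | inj2 t, x => t.countFree x
  | lam y t, x => if y = x then 0 else t.countFree x
  | star a b, x => a.countFree x + b.countFree x

/-- A natural number strictly larger than every variable occurring in the term. -/
def freshVar : LTerm → ℕ
  | var x => x + 1
  | pair u v => max u.freshVar v.freshVar
  | inj1 t => t.freshVar
  | inj2 t => t.freshVar
  | lam x t => max (x + 1) t.freshVar
  | star u v => max u.freshVar v.freshVar

end LTerm

/-- Typing for λ_s-terms (Γ ⊢_{λs} t : C). Contexts assign m-types to variables. -/
inductive LTyping : (ℕ → Option MTy) → LTerm → Ty → Prop where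
  | var {Γ : ℕ → Option MTy} {x : ℕ} {A : MTy} :
      Γ x = some A → LTyping Γ (.var x) (.m A)
  | pair {Γ u v A B} :
      LTyping Γ u (.m A) → LTyping Γ v (.m B) → LTyping Γ (.pair u v) (.m (.and A B))
  | inj1 {Γ t A B} :
      LTyping Γ t (.m A) → LTyping Γ (.inj1 t) (.m (.or A B))
  | inj2 {Γ t A B} :
      LTyping Γ t (.m B) → LTyping Γ (.inj2 t) (.m (.or A B))
  | lam {Γ x t A} :
      LTyping (Function.update Γ x (some A)) t .bot → LTyping Γ (.lam x t) (.m A.neg)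
  | star {Γ u v A} :
      LTyping Γ u (.m A.neg) → LTyping Γ v (.m A) → LTyping Γ (.star u v) .bot

/-- One-step reduction of λ_s-terms, closed under all term contexts. -/
inductive LStep : LTerm → LTerm → Prop where
  | beta {x u v} : LStep (.star (.lam x u) v) (u.subst x v)
  | betaBar {x u v} : LStep (.star v (.lam x u)) (u.subst x v)
  | eta {x u} : x ∉ u.Fv → LStep (.lam x (.star u (.var x))) u
  | etaBar {x u} : x ∉ u.Fv → LStep (.lam x (.star (.var x) u)) u
  | pi1 {u v w} : LStep (.star (.pair u v) (.inj1 w)) (.star u w)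
  | pi2 {u v w} : LStep (.star (.pair u v) (.inj2 w)) (.star v w)
  | pi1Bar {u v w} : LStep (.star (.inj1 w) (.pair u v)) (.star w u)
  | pi2Bar {u v w} : LStep (.star (.inj2 w) (.pair u v)) (.star w v)
  | triv {x u v} : (∃ Γ, LTyping Γ u .bot) → (∃ Γ, LTyping Γ v .bot) →
      u.countFree x = 1 → u ≠ .var x → LStep (u.subst x v) v
  | pairL {u u' v} : LStep u u' → LStep (.pair u v) (.pair u' v)
  | pairR {u v v'} : LStep v v' → LStep (.pair u v) (.pair u v')
  | inj1C {t t'} : LStep t t' → LStep (.inj1 t) (.inj1 t')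
  | inj2C {t t'} : LStep t t' → LStep (.inj2 t) (.inj2 t')
  | lamC {x t t'} : LStep t t' → LStep (.lam x t) (.lam x t')
  | starL {u u' v} : LStep u u' → LStep (.star u v) (.star u' v)
  | starR {u v v'} : LStep v v' → LStep (.star u v) (.star u v')

/-- ω-reduction: reduction of a redex which is not within the scope of a λ-abstraction. -/
inductive LStepOmega : LTerm → LTerm → Prop where
  | beta {x u v} : LStepOmega (.star (.lam x u) v) (u.subst x v)
  | betaBar {x u v} : LStepOmega (.star v (.lam x u)) (u.subst x v)
  | eta {x u} : x ∉ u.Fv → LStepOmega (.lam x (.star u (.var x))) u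
  | etaBar {x u} : x ∉ u.Fv → LStepOmega (.lam x (.star (.var x) u)) u
  | pi1 {u v w} : LStepOmega (.star (.pair u v) (.inj1 w)) (.star u w)
  | pi2 {u v w} : LStepOmega (.star (.pair u v) (.inj2 w)) (.star v w)
  | pi1Bar {u v w} : LStepOmega (.star (.inj1 w) (.pair u v)) (.star w u)
  | pi2Bar {u v w} : LStepOmega (.star (.inj2 w) (.pair u v)) (.star w v)
  | triv {x u v} : (∃ Γ, LTyping Γ u .bot) → (∃ Γ, LTyping Γ v .bot) →
      u.countFree x = 1 → u ≠ .var x → LStepOmega (u.subst x v) v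
  | pairL {u u' v} : LStepOmega u u' → LStepOmega (.pair u v) (.pair u' v)
  | pairR {u v v'} : LStepOmega v v' → LStepOmega (.pair u v) (.pair u v')
  | inj1C {t t'} : LStepOmega t t' → LStepOmega (.inj1 t) (.inj1 t')
  | inj2C {t t'} : LStepOmega t t' → LStepOmega (.inj2 t) (.inj2 t')
  | starL {u u' v} : LStepOmega u u' → LStepOmega (.star u v) (.star u' v)
  | starR {u v v'} : LStepOmega v v' → LStepOmega (.star u v) (.star u v')

/-! c-terms of the system CCL. -/

inductive CTerm : Type where
  | var : ℕ → CTerm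
  | K : CTerm
  | S : CTerm
  | C : CTerm
  | P : CTerm
  | Q1 : CTerm
  | Q2 : CTerm
  | app : CTerm → CTerm → CTerm
  | star : CTerm → CTerm → CTerm
deriving DecidableEq

namespace CTerm

/-- The combinator I = (S K K). -/
def I : CTerm := .app (.app .S .K) .K

/-- Substitution U[x := V]. -/
def subst : CTerm → ℕ → CTerm → CTerm
  | var y, x, v => if y = x then v else var y
  | app a b, x, v => app (a.subst x v) (b.subst x v)
  | star a b, x, v => star (a.subst x v) (b.subst x v)
  | c, _, _ => c

/-- Variables occurring in a c-term. -/
def vars : CTerm → Finset ℕ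
  | var y => {y}
  | app a b => a.vars ∪ b.vars
  | star a b => a.vars ∪ b.vars
  | _ => ∅

/-- A c-term is a pre-term iff it does not contain the symbol ⋆. -/
def PreTerm : CTerm → Prop
  | star _ _ => False
  | app a b => a.PreTerm ∧ b.PreTerm
  | _ => True

/-- A c-term is a star-term iff it is U ⋆ V for some pre-terms U, V. -/
def StarTerm (T : CTerm) : Prop :=
  ∃ U V : CTerm, U.PreTerm ∧ V.PreTerm ∧ T = .star U V

/-- The abstraction algorithm l_x. -/
def lx (x : ℕ) : CTerm → CTerm
  | var y => if y = x then I else .app .K (var y)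
  | app U V => if x ∈ (app U V).vars then .app (.app .S (lx x U)) (lx x V)
               else .app .K (app U V)
  | star U V => .app (.app .C (lx x U)) (lx x V)
  | T => .app .K T

end CTerm

/-- Typing for c-terms (Γ ⊢_c T : C). -/
inductive CTyping : (ℕ → Option MTy) → CTerm → Ty → Prop where
  | var {Γ : ℕ → Option MTy} {x : ℕ} {A : MTy} :
      Γ x = some A → CTyping Γ (.var x) (.m A)
  | K {Γ} (A B : MTy) :
      CTyping Γ .K (.m (.or A.neg (.or B A)))
  | S {Γ} (A B C : MTy) :
      CTyping Γ .S (.m (.or (.and A (.and B C.neg)) (.or (.and A B.neg) (.or A.neg C))))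
  | C {Γ} (A B : MTy) :
      CTyping Γ .C (.m (.or (.and A B) (.or (.and A B.neg) A.neg)))
  | P {Γ} (A B : MTy) :
      CTyping Γ .P (.m (.or A.neg (.or B.neg (.and A B))))
  | Q1 {Γ} (A B : MTy) :
      CTyping Γ .Q1 (.m (.or A.neg (.or A B)))
  | Q2 {Γ} (A B : MTy) :
      CTyping Γ .Q2 (.m (.or B.neg (.or A B)))
  | app {Γ U V A B} :
      CTyping Γ U (.m (.or A.neg B)) → CTyping Γ V (.m A) → CTyping Γ (.app U V) (.m B)
  | star {Γ U V A} :
      CTyping Γ U (.m A.neg) → CTyping Γ V (.m A) → CTyping Γ (.star U V) .bot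

/-- One-step reduction of c-terms, closed under all term contexts. -/
inductive CStep : CTerm → CTerm → Prop where
  | k {U V} : CStep (.app (.app .K U) V) U
  | s {U V W} : CStep (.app (.app (.app .S U) V) W) (.app (.app U W) (.app V W))
  | cr {U V W} : CStep (.star (.app (.app .C U) V) W) (.star (.app U W) (.app V W))
  | cl {U V W} : CStep (.star W (.app (.app .C U) V)) (.star (.app U W) (.app V W))
  | er {U} : CStep (.app (.app .C (.app .K U)) CTerm.I) U
  | el {U} : CStep (.app (.app .C CTerm.I) (.app .K U)) U
  | pq1 {U V W} : CStep (.star (.app (.app .P U) V) (.app .Q1 W)) (.star U W)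
  | pq2 {U V W} : CStep (.star (.app (.app .P U) V) (.app .Q2 W)) (.star V W)
  | qp1 {U V W} : CStep (.star (.app .Q1 W) (.app (.app .P U) V)) (.star W U)
  | qp2 {U V W} : CStep (.star (.app .Q2 W) (.app (.app .P U) V)) (.star W V)
  | simp {x W U V} : (∃ Γ, CTyping Γ W .bot) →
      CStep (W.subst x (.app (.app .C (.app .K U)) (.app .K V))) (.star U V)
  | appL {U U' V} : CStep U U' → CStep (.app U V) (.app U' V)
  | appR {U V V'} : CStep V V' → CStep (.app U V) (.app U V')
  | starL {U U' V} : CStep U U' → CStep (.star U V) (.star U' V)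
  | starR {U V V'} : CStep V V' → CStep (.star U V) (.star U V')

/-- The translation φ from λ_s-terms to c-terms. -/
def phi : LTerm → CTerm
  | .var x => .var x
  | .lam x t => CTerm.lx x (phi t)
  | .star u v => .star (phi u) (phi v)
  | .pair u v => .app (.app .P (phi u)) (phi v)
  | .inj1 t => .app .Q1 (phi t)
  | .inj2 t => .app .Q2 (phi t)

/-! Notations π_i and [·,·] for λ_s-terms, and the translation ψ. -/

/-- π_1 t = λx.(t ⋆ σ1(x)) with x ∉ Fv(t). -/
def proj1 (t : LTerm) : LTerm := .lam t.freshVar (.star t (.inj1 (.var t.freshVar)))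

/-- π_2 t = λx.(t ⋆ σ2(x)) with x ∉ Fv(t). -/
def proj2 (t : LTerm) : LTerm := .lam t.freshVar (.star t (.inj2 (.var t.freshVar)))

/-- [u,v] = λx.(u ⋆ ⟨v,x⟩) with x ∉ Fv(u) ∪ Fv(v). -/
def lapp (u v : LTerm) : LTerm :=
  .lam (max u.freshVar v.freshVar) (.star u (.pair v (.var (max u.freshVar v.freshVar))))

/-- The translation ψ from c-terms to λ_s-terms. -/
def psi : CTerm → LTerm
  | .var x => .var x
  | .K => .lam 0 (.star (proj1 (.var 0)) (proj2 (proj2 (.var 0))))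
  | .S => .lam 0 (.star
            (lapp (lapp (proj1 (.var 0)) (proj1 (proj2 (proj2 (.var 0)))))
                  (lapp (proj1 (proj2 (.var 0))) (proj1 (proj2 (proj2 (.var 0))))))
            (proj2 (proj2 (proj2 (.var 0)))))
  | .C => .lam 0 (.star (lapp (proj1 (.var 0)) (proj2 (proj2 (.var 0))))
                        (lapp (proj1 (proj2 (.var 0))) (proj2 (proj2 (.var 0)))))
  | .P => .lam 0 (.star (.pair (proj1 (.var 0)) (proj1 (proj2 (.var 0))))
                        (proj2 (proj2 (.var 0))))
  | .Q1 => .lam 0 (.star (.inj1 (proj1 (.var 0))) (proj2 (.var 0)))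
  | .Q2 => .lam 0 (.star (.inj2 (proj1 (.var 0))) (proj2 (.var 0)))
  | .app U V => lapp (psi U) (psi V)
  | .star U V => .star (psi U) (psi V)

/-! Under ψ, π_i becomes ∧-elimination and [u, v] becomes modus ponens from A⊥ ∨ B and A to B.
These derived rules are sound because the variable bound in π_i t and [u, v] lies above every
variable of the subterms, so adding it to the context does not disturb their typings. The image of
each combinator is then typed by projecting its bound variable, whose type is the negated axiom,
onto the components of that type. -/

@[simp]
theorem MTy.neg_neg (A : MTy) : A.neg.neg = A := by
  induction A <;> simp only [MTy.neg, *]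

theorem LTerm.lt_freshVar_of_mem_Fv {t : LTerm} {x : ℕ} (hx : x ∈ t.Fv) : x < t.freshVar := by
  induction t with
  | var y => simp_all [LTerm.Fv, LTerm.freshVar]
  | inj1 t ih | inj2 t ih => exact ih hx
  | lam y t ih =>
    simp only [LTerm.Fv, Finset.mem_erase] at hx
    exact lt_max_of_lt_right (ih hx.2)
  | pair u v ihu ihv | star u v ihu ihv =>
    simp only [LTerm.Fv, Finset.mem_union] at hx
    rcases hx with hu | hv
    · exact lt_max_of_lt_left (ihu hu)
    · exact lt_max_of_lt_right (ihv hv)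

namespace LTyping

variable {Γ : ℕ → Option MTy} {t u v : LTerm} {x : ℕ} {A B : MTy}

theorem of_eqOn_Fv {Δ : ℕ → Option MTy} {T : Ty} (h : LTyping Γ t T)
    (hΔ : ∀ y ∈ t.Fv, Δ y = Γ y) : LTyping Δ t T := by
  induction h generalizing Δ with
  | var hy => exact .var (by rwa [hΔ _ (Finset.mem_singleton_self _)])
  | pair _ _ ihu ihv =>
    exact .pair (ihu fun y hy => hΔ y (Finset.mem_union_left _ hy))
      (ihv fun y hy => hΔ y (Finset.mem_union_right _ hy))
  | star _ _ ihu ihv =>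
    exact .star (ihu fun y hy => hΔ y (Finset.mem_union_left _ hy))
      (ihv fun y hy => hΔ y (Finset.mem_union_right _ hy))
  | inj1 _ ih => exact .inj1 (ih hΔ)
  | inj2 _ ih => exact .inj2 (ih hΔ)
  | @lam Γ y t A _ ih =>
    refine .lam (ih fun z hz => ?_)
    rcases eq_or_ne z y with rfl | hzy
    · simp only [Function.update_self]
    · simp only [Function.update_of_ne hzy]
      exact hΔ z (Finset.mem_erase.2 ⟨hzy, hz⟩)

theorem update_of_freshVar_le {T : Ty} {y : ℕ} {a : Option MTy} (h : LTyping Γ t T)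
    (hy : t.freshVar ≤ y) : LTyping (Function.update Γ y a) t T :=
  h.of_eqOn_Fv fun _ hz =>
    Function.update_of_ne (ne_of_lt (lt_of_lt_of_le (t.lt_freshVar_of_mem_Fv hz) hy)) _ _

theorem var_update_self : LTyping (Function.update Γ x (some A)) (.var x) (.m A) :=
  .var (Function.update_self _ _ _)

theorem lam_of_neg (h : LTyping (Function.update Γ x (some A.neg)) t .bot) :
    LTyping Γ (.lam x t) (.m A) := by
  simpa only [MTy.neg_neg] using LTyping.lam h

/-- A form of `lam_of_neg` handing over the typing of the bound variable, so that both it and the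
goal can be normalised together by `simp only [MTy.neg, MTy.neg_neg]`. -/
theorem lam_of_var_neg
    (h : LTyping (Function.update Γ x (some A.neg)) (.var x) (.m A.neg) →
      LTyping (Function.update Γ x (some A.neg)) t .bot) :
    LTyping Γ (.lam x t) (.m A) :=
  lam_of_neg (h var_update_self)

theorem star_neg (hu : LTyping Γ u (.m A)) (hv : LTyping Γ v (.m A.neg)) :
    LTyping Γ (.star u v) .bot :=
  .star (A := A.neg) (by rwa [MTy.neg_neg]) hv

theorem proj1 (h : LTyping Γ t (.m (.and A B))) : LTyping Γ (proj1 t) (.m A) :=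
  lam_of_neg (star_neg (h.update_of_freshVar_le le_rfl) (.inj1 var_update_self))

theorem proj2 (h : LTyping Γ t (.m (.and A B))) : LTyping Γ (proj2 t) (.m B) :=
  lam_of_neg (star_neg (h.update_of_freshVar_le le_rfl) (.inj2 var_update_self))

theorem lapp (hu : LTyping Γ u (.m (.or A.neg B))) (hv : LTyping Γ v (.m A)) :
    LTyping Γ (lapp u v) (.m B) :=
  lam_of_neg <| star_neg (A := .or A.neg B) (hu.update_of_freshVar_le (le_max_left _ _)) <|
    .pair (by rw [MTy.neg_neg]; exact hv.update_of_freshVar_le (le_max_right _ _)) var_update_self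

theorem psi_K (A B : MTy) : LTyping Γ (psi .K) (.m (.or A.neg (.or B A))) := by
  refine lam_of_var_neg fun x => ?_
  simp only [MTy.neg, MTy.neg_neg] at x ⊢
  exact star_neg x.proj1 x.proj2.proj2

theorem psi_S (A B C : MTy) :
    LTyping Γ (psi .S) (.m (.or (.and A (.and B C.neg)) (.or (.and A B.neg) (.or A.neg C)))) := by
  refine lam_of_var_neg fun x => ?_
  simp only [MTy.neg, MTy.neg_neg] at x ⊢
  have ha := x.proj2.proj2.proj1
  exact star_neg ((x.proj1.lapp ha).lapp (x.proj2.proj1.lapp ha)) x.proj2.proj2.proj2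

theorem psi_C (A B : MTy) :
    LTyping Γ (psi .C) (.m (.or (.and A B) (.or (.and A B.neg) A.neg))) := by
  refine lam_of_var_neg fun x => ?_
  simp only [MTy.neg, MTy.neg_neg] at x ⊢
  exact .star (x.proj1.lapp x.proj2.proj2) (x.proj2.proj1.lapp x.proj2.proj2)

theorem psi_P (A B : MTy) : LTyping Γ (psi .P) (.m (.or A.neg (.or B.neg (.and A B)))) := by
  refine lam_of_var_neg fun x => ?_
  simp only [MTy.neg, MTy.neg_neg] at x ⊢
  exact star_neg (A := .and A B) (.pair x.proj1 x.proj2.proj1) x.proj2.proj2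

theorem psi_Q1 (A B : MTy) : LTyping Γ (psi .Q1) (.m (.or A.neg (.or A B))) := by
  refine lam_of_var_neg fun x => ?_
  simp only [MTy.neg, MTy.neg_neg] at x ⊢
  exact star_neg (A := .or A B) (.inj1 x.proj1) x.proj2

theorem psi_Q2 (A B : MTy) : LTyping Γ (psi .Q2) (.m (.or B.neg (.or A B))) := by
  refine lam_of_var_neg fun x => ?_
  simp only [MTy.neg, MTy.neg_neg] at x ⊢
  exact star_neg (A := .or A B) (.inj2 x.proj1) x.proj2

end LTyping

/-- The translation ψ preserves typing. -/
theorem psi_preserves_typing (Γ : ℕ → Option MTy) (U : CTerm) (C : Ty)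
    (ht : CTyping Γ U C) : LTyping Γ (psi U) C := by
  induction ht with
  | var h => exact .var h
  | K A B => exact .psi_K A B
  | S A B C => exact .psi_S A B C
  | C A B => exact .psi_C A B
  | P A B => exact .psi_P A B
  | Q1 A B => exact .psi_Q1 A B
  | Q2 A B => exact .psi_Q2 A B
  | app _ _ ihU ihV => exact ihU.lapp ihV
  | star _ _ ihU ihV => exact .star ihU ihV
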